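/- Let φ be mixing with respect to a finite invariant measure μ, let {C_i} be a finite measurable partition with μ[C_i] > 0 for all i, and let P ≪ μ with P[C_i] > 0. Then the two-step conditional transition probabilities T_{i,k,j}^{(n,n+m)} := P[φ^{-(n+m)}(C_j) | φ^{-n}(C_k) ∩ C_i] converge as n → ∞ to P_*[φ^{-m}(C_j) | C_k], a limit independent of the initial cell index i. -/

import Mathlib

/-!
Mixing says that `𝟙_{φ⁻ⁿ A} → μ A / μ X` when tested against indicators of measurable sets.
Since the functionals `g ↦ ∫_{φ⁻ⁿ A} g dμ` are uniformly 1-Lipschitz on `L¹(μ)`, the convergence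
extends to every integrable `g`, in particular to the density of any finite `ν ≪ μ`: thus
`ν (φ⁻ⁿ A) → μ A / μ X · ν X`. For `ν = P|_{C i}`, taking the ratio of this limit for
`A = φ⁻ᵐ C j ∩ C k` and for `A = C k` gives the theorem, the factor `ν X / μ X` cancelling.
-/

open MeasureTheory Filter Set Topology

namespace MeasureTheory

variable {X : Type*} [MeasurableSpace X] {μ : Measure X}

lemma lipschitzWith_one_L1_setIntegral (S : Set X) :
    LipschitzWith 1 fun f : X →₁[μ] ℝ => ∫ x in S, f x ∂μ := by
  refine LipschitzWith.of_dist_le_mul fun f g => ?_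
  have hsub : ∫ x in S, f x ∂μ - ∫ x in S, g x ∂μ = ∫ x in S, (f - g) x ∂μ := by
    rw [← integral_sub (L1.integrable_coeFn f).integrableOn (L1.integrable_coeFn g).integrableOn]
    exact integral_congr_ae (ae_restrict_of_ae (Lp.coeFn_sub f g)) |>.symm
  rw [NNReal.coe_one, one_mul, dist_eq_norm, dist_eq_norm, hsub, L1.norm_eq_integral_norm]
  calc ‖∫ x in S, (f - g) x ∂μ‖ ≤ ∫ x in S, ‖(f - g) x‖ ∂μ := norm_integral_le_integral_norm _
    _ ≤ ∫ x, ‖(f - g) x‖ ∂μ :=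
      setIntegral_le_integral (L1.integrable_coeFn _).norm (.of_forall fun _ => norm_nonneg _)

theorem tendsto_setIntegral_of_tendsto_measureReal_inter {T : ℕ → Set X} {c : ℝ}
    (hT : ∀ B, MeasurableSet B → Tendsto (fun n => μ.real (T n ∩ B)) atTop (𝓝 (c * μ.real B)))
    {g : X → ℝ} (hg : Integrable g μ) :
    Tendsto (fun n => ∫ x in T n, g x ∂μ) atTop (𝓝 (c * ∫ x, g x ∂μ)) := by
  refine Integrable.induction _ ?indicator ?add ?closed ?ae hg
  case indicator =>
    intro e s hs _
    simp only [setIntegral_indicator hs, setIntegral_const, integral_indicator_const _ hs,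
      smul_eq_mul]
    simpa only [mul_assoc] using (hT s hs).mul_const e
  case add =>
    intro f g _ hf hg hfT hgT
    simp only [Pi.add_apply, integral_add hf hg, integral_add hf.integrableOn hg.integrableOn,
      mul_add]
    exact hfT.add hgT
  case closed =>
    have hequi := LipschitzWith.uniformEquicontinuous _ 1 fun n =>
      lipschitzWith_one_L1_setIntegral (μ := μ) (T n)
    exact hequi.equicontinuous.isClosed_setOfPred_tendsto (continuous_const.mul continuous_integral)
  case ae =>
    intro f g hfg _ hf
    simpa only [integral_congr_ae hfg, integral_congr_ae (ae_restrict_of_ae hfg)] using hf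

theorem tendsto_measureReal_of_tendsto_measureReal_inter [SigmaFinite μ] {T : ℕ → Set X} {c : ℝ}
    (hT : ∀ B, MeasurableSet B → Tendsto (fun n => μ.real (T n ∩ B)) atTop (𝓝 (c * μ.real B)))
    {ν : Measure X} [IsFiniteMeasure ν] (hνμ : ν ≪ μ) :
    Tendsto (fun n => ν.real (T n)) atTop (𝓝 (c * ν.real univ)) := by
  have h := tendsto_setIntegral_of_tendsto_measureReal_inter hT
    (Measure.integrable_toReal_rnDeriv (μ := ν) (ν := μ))
  simpa only [Measure.setIntegral_toReal_rnDeriv hνμ, ← setIntegral_univ] using h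

def IsMixing (μ : Measure X) (φ : X → X) : Prop :=
  ∀ A B : Set X, MeasurableSet A → MeasurableSet B →
    Tendsto (fun n => μ.real (φ^[n] ⁻¹' A ∩ B)) atTop (𝓝 (μ.real A / μ.real univ * μ.real B))

namespace IsMixing

variable {φ : X → X} {ν : Measure X} {A B : Set X}

theorem tendsto_measureReal_preimage_iterate [SigmaFinite μ] [IsFiniteMeasure ν]
    (hφ : IsMixing μ φ) (hνμ : ν ≪ μ) (hA : MeasurableSet A) :
    Tendsto (fun n => ν.real (φ^[n] ⁻¹' A)) atTop (𝓝 (μ.real A / μ.real univ * ν.real univ)) :=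
  tendsto_measureReal_of_tendsto_measureReal_inter (fun B hB => hφ A B hA hB) hνμ

theorem tendsto_measureReal_preimage_iterate_div [IsFiniteMeasure μ] [IsFiniteMeasure ν]
    (hφ : IsMixing μ φ) (hνμ : ν ≪ μ) (hν : ν ≠ 0)
    (hA : MeasurableSet A) (hB : MeasurableSet B) (hμB : μ B ≠ 0) :
    Tendsto (fun n => ν.real (φ^[n] ⁻¹' A) / ν.real (φ^[n] ⁻¹' B)) atTop
      (𝓝 (μ.real A / μ.real B)) := by
  have hμB' : μ.real B ≠ 0 := (measureReal_ne_zero_iff).mpr hμB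
  have hμX : μ.real univ ≠ 0 :=
    (measureReal_ne_zero_iff).mpr fun h => hμB (measure_mono_null (subset_univ B) h)
  have hνX : ν.real univ ≠ 0 := (measureReal_ne_zero_iff).mpr (Measure.measure_univ_ne_zero.mpr hν)
  have h := (hφ.tendsto_measureReal_preimage_iterate hνμ hA).div
    (hφ.tendsto_measureReal_preimage_iterate hνμ hB) (by positivity)
  rwa [mul_div_mul_right _ _ hνX, div_div_div_cancel_right₀ hμX] at h

end IsMixing

end MeasureTheory

theorem mixing_two_step_transition_limit
    {X : Type*} [MeasurableSpace X] {I : Type*}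
    (μ P : Measure X) [IsFiniteMeasure μ] [IsProbabilityMeasure P]
    (φ : X → X) (hφ : MeasurePreserving φ μ μ) (hac : P ≪ μ)
    (hmix : ∀ A B : Set X, MeasurableSet A → MeasurableSet B →
      Tendsto (fun n => (μ (φ^[n] ⁻¹' A ∩ B)).toReal) atTop
        (𝓝 ((μ A).toReal / (μ Set.univ).toReal * (μ B).toReal)))
    (C : I → Set X) (hmeas : ∀ i, MeasurableSet (C i))
    (hpos : ∀ i, 0 < μ (C i))
    (i k j : I) (hPi : 0 < P (C i)) (m : ℕ) :
    Tendsto (fun n =>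
        (P (φ^[n + m] ⁻¹' (C j) ∩ (φ^[n] ⁻¹' (C k) ∩ C i))).toReal /
          (P (φ^[n] ⁻¹' (C k) ∩ C i)).toReal) atTop
      (𝓝 ((μ (φ^[m] ⁻¹' (C j) ∩ C k)).toReal / (μ (C k)).toReal)) := by
  have hA : MeasurableSet (φ^[m] ⁻¹' C j ∩ C k) :=
    ((hmeas j).preimage (hφ.measurable.iterate m)).inter (hmeas k)
  have hνμ : P.restrict (C i) ≪ μ :=
    (Measure.absolutelyContinuous_of_le Measure.restrict_le_self).trans hac
  have hν : P.restrict (C i) ≠ 0 := by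
    rw [Ne, Measure.restrict_eq_zero]
    exact hPi.ne'
  refine (IsMixing.tendsto_measureReal_preimage_iterate_div hmix hνμ hν hA (hmeas k)
    (hpos k).ne').congr fun n => ?_
  simp only [measureReal_def, Measure.restrict_apply' (hmeas i), preimage_inter,
    ← preimage_comp, ← Function.iterate_add, add_comm m n, inter_assoc]
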